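/- Let M be a random m×n GF(2) matrix with i.i.d. Bernoulli(p) entries (p ≤ 1/2), and B an m×s GF(2) matrix of full rank s < m such that every set of at most t rows of B is linearly independent. Let Y be uniform on a set S₀ ⊆ {0,1}^n of size 2^k and R uniform on {0,1}^s, all independent. Then Pr[MY = BR] ≤ 2^{−m}·(1 + 2^{m−s−k}·e^{n·e^{−2pt}}). -/

import Mathlib

/-!
Expand the indicator of `M y = B R` in the characters `x ↦ (-1)^(c ⬝ᵥ x)` of `GF(2)^m`. For each
`c` the average over `M` and `R` factorises: the `R`-average vanishes unless `c ᵥ* B = 0`, and the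
`M`-average of `(-1)^(c ⬝ᵥ M y)` is `(1 - 2p)^(|c| |y|)`, with `|·|` the Hamming weight. The term
`c = 0` contributes `1`. Every other `c` in the left kernel of `B` has weight `> t`, since any `t`
rows of `B` are independent, and the left kernel has `2^(m - s)` elements. Finally the average of
`(1 - 2p)^(t |y|)` over `y ∈ S₀` is at most `2^(-k) (1 + (1 - 2p)^t)^n ≤ 2^(-k) e^(n e^(-2pt))`.
-/

open Finset Matrix
open scoped Classical

theorem AddChar.map_sum_eq_prod {A M ι : Type*} [AddCommMonoid A] [CommMonoid M]
    (ψ : AddChar A M) (s : Finset ι) (f : ι → A) :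
    ψ (∑ i ∈ s, f i) = ∏ i ∈ s, ψ (f i) := by
  induction s using Finset.cons_induction with
  | empty => simp
  | cons a s ha ih => rw [sum_cons, prod_cons, map_add_eq_mul, ih]

theorem ZMod.eq_zero_or_eq_one_mod_two (a : ZMod 2) : a = 0 ∨ a = 1 := by
  revert a; decide

theorem ZMod.sum_univ_two {M : Type*} [AddCommMonoid M] (f : ZMod 2 → M) :
    ∑ a, f a = f 0 + f 1 :=
  Fin.sum_univ_two f

noncomputable def signChar : AddChar (ZMod 2) ℝ := AddChar.zmodChar 2 (ζ := -1) (by norm_num)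

theorem signChar_one : signChar 1 = -1 := by
  simp [signChar, AddChar.zmodChar_apply, ZMod.val_one]

theorem sum_signChar_mul (x : ZMod 2) :
    ∑ a, signChar (x * a) = if x = 0 then 2 else 0 := by
  obtain rfl | rfl := x.eq_zero_or_eq_one_mod_two <;> simp [ZMod.sum_univ_two, signChar_one]

theorem sum_signChar_dotProduct {ι : Type*} [Fintype ι] [DecidableEq ι] (v : ι → ZMod 2) :
    ∑ c : ι → ZMod 2, signChar (v ⬝ᵥ c) = if v = 0 then 2 ^ Fintype.card ι else 0 := by
  simp only [dotProduct, AddChar.map_sum_eq_prod]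
  rw [← Fintype.prod_sum (fun i a => signChar (v i * a))]
  simp only [sum_signChar_mul, Fintype.prod_ite_zero, prod_const, card_univ, funext_iff,
    Pi.zero_apply]

theorem ite_eq_eq_sum_signChar {ι : Type*} [Fintype ι] [DecidableEq ι] (u w : ι → ZMod 2) :
    (if u = w then 1 else 0 : ℝ) =
      (2 ^ Fintype.card ι)⁻¹ * ∑ c, signChar (c ⬝ᵥ u) * signChar (c ⬝ᵥ w) := by
  have h (c : ι → ZMod 2) : signChar (c ⬝ᵥ u) * signChar (c ⬝ᵥ w) = signChar ((u - w) ⬝ᵥ c) := by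
    rw [← AddChar.map_add_eq_mul, ← dotProduct_add, dotProduct_comm]
    congr 2
    ext i
    exact (CharTwo.sub_eq_add _ _).symm
  simp only [h, sum_signChar_dotProduct, sub_eq_zero]
  split_ifs <;> simp

theorem sum_sum_mul_ite_eq {α β ι : Type*} [Fintype α] [Fintype β] [Fintype ι] [DecidableEq ι]
    (μ : α → ℝ) (ν : β → ℝ) (f : α → ι → ZMod 2) (g : β → ι → ZMod 2) :
    ∑ a, ∑ b, μ a * ν b * (if f a = g b then 1 else 0) =
      (2 ^ Fintype.card ι)⁻¹ *
        ∑ c, (∑ a, μ a * signChar (c ⬝ᵥ f a)) * ∑ b, ν b * signChar (c ⬝ᵥ g b) := by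
  simp only [sum_mul_sum]
  simp only [ite_eq_eq_sum_signChar, mul_sum]
  conv_lhs => enter [2, a]; rw [sum_comm]
  rw [sum_comm]
  refine sum_congr rfl fun c _ => sum_congr rfl fun a _ => sum_congr rfl fun b _ => ?_
  ring

noncomputable def bernoulliWeight (p : ℝ) (a : ZMod 2) : ℝ := if a = 1 then p else 1 - p

theorem sum_bernoulliWeight_mul_signChar (p : ℝ) (x : ZMod 2) :
    ∑ a, bernoulliWeight p a * signChar (a * x) = if x = 0 then 1 else 1 - 2 * p := by
  obtain rfl | rfl := x.eq_zero_or_eq_one_mod_two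
  · simp [ZMod.sum_univ_two, bernoulliWeight]
  · simp [ZMod.sum_univ_two, bernoulliWeight, signChar_one]
    ring

theorem prod_ite_eq_pow_hammingNorm {ι β M : Type*} [Fintype ι] [Zero β] [DecidableEq β]
    [CommMonoid M] (x : ι → β) (r : M) : ∏ i, (if x i = 0 then 1 else r) = r ^ hammingNorm x := by
  rw [hammingNorm, ← prod_const, prod_filter]
  simp only [ne_eq, ite_not]

theorem sum_pow_hammingNorm {ι : Type*} [Fintype ι] [DecidableEq ι] (r : ℝ) :
    ∑ y : ι → ZMod 2, r ^ hammingNorm y = (1 + r) ^ Fintype.card ι := by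
  simp only [← prod_ite_eq_pow_hammingNorm]
  rw [← Fintype.prod_sum (fun _ a => if a = 0 then 1 else r)]
  simp [ZMod.sum_univ_two]

theorem sum_pow_hammingNorm_le {ι : Type*} [Fintype ι] [DecidableEq ι] {r : ℝ} (hr : 0 ≤ r)
    (S : Finset (ι → ZMod 2)) : ∑ y ∈ S, r ^ hammingNorm y ≤ (1 + r) ^ Fintype.card ι :=
  (sum_le_univ_sum_of_nonneg fun _ => pow_nonneg hr _).trans_eq (sum_pow_hammingNorm r)

theorem sum_prod_bernoulliWeight_mul_signChar {ι : Type*} [Fintype ι] [DecidableEq ι] (p : ℝ)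
    (x : ι → ZMod 2) :
    ∑ r : ι → ZMod 2, (∏ j, bernoulliWeight p (r j)) * signChar (r ⬝ᵥ x) =
      (1 - 2 * p) ^ hammingNorm x := by
  simp only [dotProduct, AddChar.map_sum_eq_prod, ← prod_mul_distrib]
  rw [← Fintype.prod_sum (fun j a => bernoulliWeight p a * signChar (a * x j))]
  simp only [sum_bernoulliWeight_mul_signChar, prod_ite_eq_pow_hammingNorm]

theorem sum_matrix_bernoulliWeight_mul_signChar {m n : Type*} [Fintype m] [Fintype n]
    [DecidableEq m] [DecidableEq n] (p : ℝ) (c : m → ZMod 2) (y : n → ZMod 2) :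
    ∑ M : Matrix m n (ZMod 2), (∏ i, ∏ j, bernoulliWeight p (M i j)) * signChar (c ⬝ᵥ M *ᵥ y) =
      (1 - 2 * p) ^ (hammingNorm c * hammingNorm y) := by
  have hrow (M : Matrix m n (ZMod 2)) : c ⬝ᵥ M *ᵥ y = ∑ i, M i ⬝ᵥ (c i • y) := by
    simp only [dotProduct_smul, smul_eq_mul]; rfl
  have hwt (i : m) : (1 - 2 * p) ^ hammingNorm (c i • y) =
      if c i = 0 then 1 else (1 - 2 * p) ^ hammingNorm y := by
    split_ifs with h
    · simp [h]
    · rw [hammingNorm_smul fun _ => (IsRegular.of_ne_zero h).isSMulRegular]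
  simp only [hrow, AddChar.map_sum_eq_prod, ← prod_mul_distrib]
  refine (Fintype.prod_sum fun i (r : n → ZMod 2) =>
    (∏ j, bernoulliWeight p (r j)) * signChar (r ⬝ᵥ (c i • y))).symm.trans ?_
  rw [Nat.mul_comm, pow_mul]
  simp only [sum_prod_bernoulliWeight_mul_signChar, hwt, prod_ite_eq_pow_hammingNorm]

theorem sum_signChar_dotProduct_mulVec {m s : Type*} [Fintype m] [Fintype s] [DecidableEq s]
    (B : Matrix m s (ZMod 2)) (c : m → ZMod 2) :
    ∑ R : s → ZMod 2, signChar (c ⬝ᵥ B *ᵥ R) = if c ᵥ* B = 0 then 2 ^ Fintype.card s else 0 := by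
  simp only [dotProduct_mulVec, sum_signChar_dotProduct]

theorem card_filter_vecMul_eq_zero {K m n : Type*} [Field K] [Fintype K] [DecidableEq K]
    [Fintype m] [DecidableEq m] [Fintype n] (B : Matrix m n K) :
    #{c : m → K | c ᵥ* B = 0} = Fintype.card K ^ (Fintype.card m - B.rank) := by
  have hker : #{c : m → K | c ᵥ* B = 0} = Fintype.card (LinearMap.ker B.vecMulLinear) := by
    rw [← Fintype.card_subtype]
    exact Fintype.card_congr (Equiv.subtypeEquivRight fun c => by simp)
  have hrange : Module.finrank K (LinearMap.range B.vecMulLinear) = B.rank := by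
    rw [← mulVecLin_transpose, ← rank_transpose]; rfl
  have := LinearMap.finrank_range_add_finrank_ker B.vecMulLinear
  rw [Module.finrank_fintype_fun_eq_card, hrange] at this
  rw [hker, Module.card_eq_pow_finrank (K := K)]
  congr 1
  omega

theorem lt_hammingNorm_of_sum_smul_eq_zero {ι R V : Type*} [Fintype ι] [Ring R] [DecidableEq R]
    [AddCommGroup V] [Module R V] {v : ι → V} {t : ℕ}
    (hv : ∀ T : Finset ι, #T ≤ t → LinearIndependent R (fun i : T => v i))
    {c : ι → R} (hc : ∑ i, c i • v i = 0) (hc0 : c ≠ 0) : t < hammingNorm c := by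
  by_contra! hle
  set T : Finset ι := {i | c i ≠ 0}
  have hsum : ∑ i : T, c i • v i = 0 := by
    rw [sum_coe_sort T fun i => c i • v i, ← hc]
    exact sum_filter_of_ne fun i _ h hi => h (by rw [hi, zero_smul])
  obtain ⟨i, hi⟩ := Function.ne_iff.mp hc0
  exact hi <|
    Fintype.linearIndependent_iff.mp (hv T hle) (fun i => c i) hsum ⟨i, by simpa [T] using hi⟩

theorem sum_bernoulliWeight_mul_ite_mulVec_eq {m n s : Type*} [Fintype m] [Fintype n] [Fintype s]
    [DecidableEq m] [DecidableEq n] [DecidableEq s]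
    (p : ℝ) (B : Matrix m s (ZMod 2)) (y : n → ZMod 2) :
    ∑ M : Matrix m n (ZMod 2), ∑ R : s → ZMod 2,
        (∏ i, ∏ j, bernoulliWeight p (M i j)) * (2 ^ Fintype.card s)⁻¹ *
          (if M *ᵥ y = B *ᵥ R then 1 else 0) =
      (2 ^ Fintype.card m)⁻¹ *
        ∑ c ∈ {c : m → ZMod 2 | c ᵥ* B = 0}, (1 - 2 * p) ^ (hammingNorm c * hammingNorm y) := by
  rw [sum_sum_mul_ite_eq]
  simp only [sum_matrix_bernoulliWeight_mul_signChar, ← mul_sum, sum_signChar_dotProduct_mulVec,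
    sum_filter]
  congr 1
  refine sum_congr rfl fun c _ => ?_
  split_ifs <;> simp

theorem sum_filter_vecMul_eq_zero_pow_le {m s : Type*} [Fintype m] [DecidableEq m] [Fintype s]
    {p : ℝ} (hp0 : 0 ≤ p) (hp : p ≤ 1 / 2) (B : Matrix m s (ZMod 2)) {t : ℕ}
    (hB : ∀ T : Finset m, #T ≤ t → LinearIndependent (ZMod 2) (fun i : T => B i)) (w : ℕ) :
    ∑ c ∈ {c : m → ZMod 2 | c ᵥ* B = 0}, (1 - 2 * p) ^ (hammingNorm c * w) ≤
      1 + #{c : m → ZMod 2 | c ᵥ* B = 0} * ((1 - 2 * p) ^ t) ^ w := by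
  set K : Finset (m → ZMod 2) := {c | c ᵥ* B = 0}
  have h0 : (0 : m → ZMod 2) ∈ K := by simp [K]
  rw [← add_sum_erase K (fun c => (1 - 2 * p) ^ (hammingNorm c * w)) h0, hammingNorm_zero,
    zero_mul, pow_zero]
  gcongr
  calc ∑ c ∈ K.erase 0, (1 - 2 * p) ^ (hammingNorm c * w)
      ≤ #(K.erase 0) • ((1 - 2 * p) ^ t) ^ w := by
        refine sum_le_card_nsmul _ _ _ fun c hc => ?_
        obtain ⟨hc0, hcK⟩ := mem_erase.mp hc
        have hker : ∑ i, c i • B i = 0 := by rw [← vecMul_eq_sum]; simpa [K] using hcK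
        have ht := lt_hammingNorm_of_sum_smul_eq_zero hB hker hc0
        rw [← pow_mul]
        exact pow_le_pow_of_le_one (by linarith) (by linarith) (Nat.mul_le_mul_right w ht.le)
    _ ≤ #K * ((1 - 2 * p) ^ t) ^ w := by
        rw [nsmul_eq_mul]
        gcongr
        · exact pow_nonneg (pow_nonneg (by linarith) t) w
        · exact erase_subset 0 K

theorem sum_bernoulliWeight_mul_ite_mulVec_le {m n s : Type*} [Fintype m] [Fintype n]
    [Fintype s] [DecidableEq m] [DecidableEq n] [DecidableEq s] {p : ℝ} (hp0 : 0 ≤ p)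
    (hp : p ≤ 1 / 2) (B : Matrix m s (ZMod 2)) {t : ℕ}
    (hB : ∀ T : Finset m, #T ≤ t → LinearIndependent (ZMod 2) (fun i : T => B i))
    (y : n → ZMod 2) :
    ∑ M : Matrix m n (ZMod 2), ∑ R : s → ZMod 2,
        (∏ i, ∏ j, bernoulliWeight p (M i j)) * (2 ^ Fintype.card s)⁻¹ *
          (if M *ᵥ y = B *ᵥ R then 1 else 0) ≤
      (2 ^ Fintype.card m)⁻¹ *
        (1 + 2 ^ (Fintype.card m - B.rank) * ((1 - 2 * p) ^ t) ^ hammingNorm y) := by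
  rw [sum_bernoulliWeight_mul_ite_mulVec_eq]
  gcongr
  simpa [card_filter_vecMul_eq_zero] using
    sum_filter_vecMul_eq_zero_pow_le hp0 hp B hB (hammingNorm y)

theorem one_add_one_sub_two_mul_pow_pow_le_exp {p : ℝ} (hp : p ≤ 1 / 2) (t n : ℕ) :
    (1 + (1 - 2 * p) ^ t) ^ n ≤ Real.exp (n * Real.exp (-2 * p * t)) := by
  have hq0 : 0 ≤ (1 - 2 * p) ^ t := pow_nonneg (by linarith) t
  have hq : (1 - 2 * p) ^ t ≤ Real.exp (-2 * p * t) := by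
    calc (1 - 2 * p) ^ t ≤ Real.exp (-2 * p) ^ t :=
          pow_le_pow_left₀ (by linarith) (by linarith [Real.add_one_le_exp (-2 * p)]) t
      _ = Real.exp (-2 * p * t) := by rw [← Real.exp_nat_mul]; ring_nf
  calc (1 + (1 - 2 * p) ^ t) ^ n ≤ Real.exp ((1 - 2 * p) ^ t) ^ n :=
        pow_le_pow_left₀ (by linarith) (by linarith [Real.add_one_le_exp ((1 - 2 * p) ^ t)]) n
    _ = Real.exp (n * (1 - 2 * p) ^ t) := (Real.exp_nat_mul _ _).symm
    _ ≤ Real.exp (n * Real.exp (-2 * p * t)) := by gcongr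

theorem stmt14_general (m n s k t : ℕ) (p : ℝ) (hp0 : 0 ≤ p) (hp : p ≤ 1/2)
    (B : Matrix (Fin m) (Fin s) (ZMod 2)) (hrank : B.rank = s)
    (hindep : ∀ T : Finset (Fin m), T.card ≤ t →
      LinearIndependent (ZMod 2) (fun i : T => (B i.1 : Fin s → ZMod 2)))
    (S₀ : Finset (Fin n → ZMod 2)) (hS : S₀.card = 2^k) :
    (∑ M : Matrix (Fin m) (Fin n) (ZMod 2), ∑ y ∈ S₀, ∑ R : Fin s → ZMod 2,
        (∏ i, ∏ j, if M i j = 1 then p else 1 - p) * (S₀.card : ℝ)⁻¹ * ((2:ℝ)^s)⁻¹ *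
          (if M.mulVec y = B.mulVec R then 1 else 0))
      ≤ ((2:ℝ)^m)⁻¹ *
          (1 + (2:ℝ)^((m:ℝ) - s - k) * Real.exp (n * Real.exp (-2*p*t))) := by
  have hq : 0 ≤ (1 - 2 * p) ^ t := pow_nonneg (by linarith) t
  have hpow : (2 : ℝ) ^ ((m : ℝ) - s - k) = 2 ^ (m - s) * (2 ^ k)⁻¹ := by
    rw [Real.rpow_sub two_pos, ← Nat.cast_sub (hrank ▸ B.rank_le_height), Real.rpow_natCast,
      Real.rpow_natCast, div_eq_mul_inv]
  calc _ = ∑ y ∈ S₀, (2 ^ k)⁻¹ * ∑ M : Matrix (Fin m) (Fin n) (ZMod 2), ∑ R : Fin s → ZMod 2,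
        (∏ i, ∏ j, bernoulliWeight p (M i j)) * (2 ^ Fintype.card (Fin s))⁻¹ *
          (if M *ᵥ y = B *ᵥ R then 1 else 0) := by
        rw [sum_comm]
        simp only [mul_sum, hS, Nat.cast_pow, Nat.cast_ofNat, Fintype.card_fin, bernoulliWeight]
        refine sum_congr rfl fun y _ => sum_congr rfl fun M _ => sum_congr rfl fun R _ => ?_
        ring
    _ ≤ ∑ y ∈ S₀, (2 ^ k)⁻¹ *
          ((2 ^ m)⁻¹ * (1 + 2 ^ (m - s) * ((1 - 2 * p) ^ t) ^ hammingNorm y)) := by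
        gcongr with y
        simpa [hrank] using sum_bernoulliWeight_mul_ite_mulVec_le hp0 hp B hindep y
    _ = (2 ^ m)⁻¹ *
          (1 + 2 ^ (m - s) * (2 ^ k)⁻¹ * ∑ y ∈ S₀, ((1 - 2 * p) ^ t) ^ hammingNorm y) := by
        simp only [mul_add, sum_add_distrib, sum_const, hS, nsmul_eq_mul, Nat.cast_pow,
          Nat.cast_ofNat, ← mul_sum]
        field_simp
    _ ≤ (2 ^ m)⁻¹ * (1 + 2 ^ (m - s) * (2 ^ k)⁻¹ * (1 + (1 - 2 * p) ^ t) ^ n) := by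
        gcongr
        simpa using sum_pow_hammingNorm_le hq S₀
    _ ≤ _ := by
        rw [hpow]
        gcongr
        exact one_add_one_sub_two_mul_pow_pow_le_exp hp t n

/-- Let `M` be a random `m×n` GF(2) matrix with i.i.d. Bernoulli(p) entries
(`p ≤ 1/2`), and `B` an `m×s` GF(2) matrix of full rank `s < m` whose every
set of at most `t` rows is linearly independent.  For `Y` uniform on a set
`S₀` of size `2^k` and `R` uniform on `{0,1}^s`, all independent,
`Pr[MY = BR] ≤ 2^{−m}·(1 + 2^{m−s−k}·e^{n·e^{−2pt}})`. -/
theorem stmt14 (m n s k t : ℕ) (hsm : s < m) (p : ℝ) (hp0 : 0 ≤ p) (hp : p ≤ 1/2)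
    (B : Matrix (Fin m) (Fin s) (ZMod 2)) (hrank : B.rank = s)
    (hindep : ∀ T : Finset (Fin m), T.card ≤ t →
      LinearIndependent (ZMod 2) (fun i : T => (B i.1 : Fin s → ZMod 2)))
    (S₀ : Finset (Fin n → ZMod 2)) (hS : S₀.card = 2^k) :
    (∑ M : Matrix (Fin m) (Fin n) (ZMod 2), ∑ y ∈ S₀, ∑ R : Fin s → ZMod 2,
        (∏ i, ∏ j, if M i j = 1 then p else 1 - p) * (S₀.card : ℝ)⁻¹ * ((2:ℝ)^s)⁻¹ *
          (if M.mulVec y = B.mulVec R then 1 else 0))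
      ≤ ((2:ℝ)^m)⁻¹ *
          (1 + (2:ℝ)^((m:ℝ) - s - k) * Real.exp (n * Real.exp (-2*p*t))) :=
  stmt14_general m n s k t p hp0 hp B hrank hindep S₀ hS
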